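/- arXiv:1809.00896 — 3 statements merged into one kernel-verified Lean document; each statement's English description precedes it below -/
import Mathlib

section
/- Let α be a type, let f : ℕ → α be a sequence of states (the state of a shared object at each time step), and let c : ℕ → ℕ be a monotone counter such that whenever the state changes, the counter strictly increases: for every n, if f n ≠ f (n+1) then c n < c (n+1). Then for all m ≤ n with c m = c n, the state is constant on the interval [m, n]: f t = f m for every t with m ≤ t ≤ n. (In particular, two successive collections observing equal states together with equal counter values certify that the state did not change at any intermediate instant.) -/
theorem Monotone.eq_of_mem_Icc_of_eq {ι β : Type*} [Preorder ι] [PartialOrder β] {c : ι → β}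
    (hc : Monotone c) {m n t : ι} (hmt : m ≤ t) (htn : t ≤ n) (hmn : c m = c n) : c t = c m :=
  le_antisymm (hmn ▸ hc htn) (hc hmt)

theorem Nat.eq_of_forall_succ_eq {α : Type*} (f : ℕ → α) {m n : ℕ}
    (h : ∀ k, m ≤ k → k < n → f (k + 1) = f k) : ∀ t, m ≤ t → t ≤ n → f t = f m := by
  intro t hmt
  induction t, hmt using Nat.le_induction with
  | base => exact fun _ => rfl
  | succ k hmk ih =>
    intro hkn
    rw [h k hmk hkn, ih (k.le_succ.trans hkn)]

theorem state_constant_of_counter_eq {α : Type*} (f : ℕ → α) (c : ℕ → ℕ)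
    (hmono : Monotone c)
    (hinc : ∀ n, f n ≠ f (n + 1) → c n < c (n + 1)) :
    ∀ m n, m ≤ n → c m = c n → ∀ t, m ≤ t → t ≤ n → f t = f m := by
  intro m n _ hc
  apply Nat.eq_of_forall_succ_eq
  intro k hmk hkn
  by_contra hne
  have hck : c k = c m := hmono.eq_of_mem_Icc_of_eq hmk hkn.le hc
  have hck' : c (k + 1) = c m := hmono.eq_of_mem_Icc_of_eq (hmk.trans k.le_succ) hkn hc
  exact (hinc k (Ne.symm hne)).ne (hck.trans hck'.symm)
end

section
/- Let V be a type, let E : ℕ → V → V → Prop be a time-varying edge relation (E n is the graph's edge relation at time step n), and let c : ℕ → V → ℕ be per-vertex counters satisfying: (i) for every vertex u, the function n ↦ c n u is monotone in n; and (ii) for every n and u, if the out-edges of u change from time n to time n+1 (i.e., there exists v with ¬(E n u v ↔ E (n+1) u v)) then c n u < c (n+1) u. Fix a source s : V and times m ≤ n, and suppose c m u = c n u for every vertex u reachable from s at time m (Relation.ReflTransGen (E m) s u). Then the reachable set from s is constant throughout [m, n]: for every t with m ≤ t ≤ n and every w : V, Relation.ReflTransGen (E t) s w ↔ Relation.ReflTransGen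 (E m) s w. In particular, if no path from s to a given vertex exists at time m, then no path exists at any instant in [m, n]. -/
/-!
A vertex whose counter has the same value at times `m` and `n` has, by monotonicity, a constant
counter on `[m, n]`, and since every change of its out-edges strictly increases the counter, its
out-edges are the same at every instant of `[m, n]`. A path from `s` at any such instant can then be
rebuilt edge by edge at time `m` (and conversely), because each edge leaves a vertex that is
already known to be reachable at time `m`, whose out-edges are frozen.
-/

theorem Monotone.apply_eq_of_apply_eq {α β : Type*} [Preorder α] [PartialOrder β] {f : α → β}
    (hf : Monotone f) {a b t : α} (hat : a ≤ t) (htb : t ≤ b) (hab : f a = f b) : f t = f a :=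
  le_antisymm (hab ▸ hf htb) (hf hat)

theorem Nat.apply_eq_of_forall_succ_eq {β : Type*} {f : ℕ → β} {m n : ℕ}
    (h : ∀ k, m ≤ k → k < n → f (k + 1) = f k) : ∀ t, m ≤ t → t ≤ n → f t = f m := by
  intro t hmt
  induction t, hmt using Nat.le_induction with
  | base => exact fun _ => rfl
  | succ k hmk ih => exact fun hkn => (h k hmk hkn).trans (ih (Nat.le_of_succ_le hkn))

theorem Relation.reflTransGen_iff_of_eq_on_reachable {α : Type*} {r r' : α → α → Prop} {s : α}
    (h : ∀ u, Relation.ReflTransGen r s u → r u = r' u) (w : α) :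
    Relation.ReflTransGen r s w ↔ Relation.ReflTransGen r' s w := by
  constructor
  · intro hw
    induction hw with
    | refl => exact .refl
    | @tail u _ hu he ih => exact ih.tail (h u hu ▸ he)
  · intro hw
    induction hw with
    | refl => exact .refl
    | @tail u _ _ he ih => exact ih.tail ((h u ih).symm ▸ he)

theorem out_edges_eq_of_counter_eq {V : Type*} {E : ℕ → V → V → Prop} {c : ℕ → V → ℕ}
    (hinc : ∀ n u, (∃ v, ¬(E n u v ↔ E (n + 1) u v)) → c n u < c (n + 1) u)
    {k : ℕ} {u : V} (h : c (k + 1) u = c k u) : E (k + 1) u = E k u := by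
  funext v
  by_contra hne
  exact (hinc k u ⟨v, fun hiff => hne (propext hiff.symm)⟩).ne' h

theorem reachable_set_constant_of_counters_eq_general {V : Type*}
    (E : ℕ → V → V → Prop) (c : ℕ → V → ℕ)
    (hmono : ∀ u, Monotone (fun n => c n u))
    (hinc : ∀ n u, (∃ v, ¬(E n u v ↔ E (n + 1) u v)) → c n u < c (n + 1) u)
    (s : V) (m n : ℕ)
    (hc : ∀ u, Relation.ReflTransGen (E m) s u → c m u = c n u) :
    ∀ t, m ≤ t → t ≤ n → ∀ w : V,
      (Relation.ReflTransGen (E t) s w ↔ Relation.ReflTransGen (E m) s w) := by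
  intro t hmt htn
  have hcounter : ∀ u, Relation.ReflTransGen (E m) s u → ∀ k, m ≤ k → k ≤ n → c k u = c m u :=
    fun u hu k hmk hkn => (hmono u).apply_eq_of_apply_eq hmk hkn (hc u hu)
  have hfrozen : ∀ u, Relation.ReflTransGen (E m) s u → E m u = E t u := by
    intro u hu
    have hstep : ∀ k, m ≤ k → k < n → E (k + 1) u = E k u := fun k hmk hkn =>
      out_edges_eq_of_counter_eq hinc <| by
        rw [hcounter u hu (k + 1) (by omega) hkn, hcounter u hu k hmk (by omega)]
    exact (Nat.apply_eq_of_forall_succ_eq (f := fun k => E k u) hstep t hmt htn).symm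
  exact fun w => (Relation.reflTransGen_iff_of_eq_on_reachable hfrozen w).symm

theorem reachable_set_constant_of_counters_eq {V : Type*}
    (E : ℕ → V → V → Prop) (c : ℕ → V → ℕ)
    (hmono : ∀ u, Monotone (fun n => c n u))
    (hinc : ∀ n u, (∃ v, ¬(E n u v ↔ E (n + 1) u v)) → c n u < c (n + 1) u)
    (s : V) (m n : ℕ) (hmn : m ≤ n)
    (hc : ∀ u, Relation.ReflTransGen (E m) s u → c m u = c n u) :
    ∀ t, m ≤ t → t ≤ n → ∀ w : V,
      (Relation.ReflTransGen (E t) s w ↔ Relation.ReflTransGen (E m) s w) :=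
  reachable_set_constant_of_counters_eq_general E c hmono hinc s m n hc
end

section
/- Let V be a type, let E : ℕ → V → V → Prop be a time-varying edge relation, and let c : ℕ → V → ℕ be per-vertex counters satisfying: (i) for every vertex u, the function n ↦ c n u is monotone in n; and (ii) for every n and u, if the out-edges of u change from time n to time n+1 (i.e., there exists v with ¬(E n u v ↔ E (n+1) u v)) then c n u < c (n+1) u. Fix times m ≤ n and a sequence of vertices v₀, v₁, …, v_k such that for every i < k the edge (vᵢ, vᵢ₊₁) is present at time m (E m vᵢ vᵢ₊₁) and the counter of each non-terminal vertex is unchanged between the two times: c m vᵢ = c n vᵢ for all i < k. Then the path is present at every intermediate instant: for every t with m ≤ t ≤ n and every i < k, E t vᵢ vᵢ₊₁ holds. -/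
theorem eq_of_counter_eq {α : Type*} (f : ℕ → α) (c : ℕ → ℕ) (hc : Monotone c)
    (hchange : ∀ t, f t ≠ f (t + 1) → c t < c (t + 1))
    {m n : ℕ} (hcmn : c m = c n) {t : ℕ} (hmt : m ≤ t) (htn : t ≤ n) : f t = f m := by
  induction t, hmt using Nat.le_induction with
  | base => rfl
  | succ t hmt ih =>
    have hstep : f t = f (t + 1) := by
      by_contra hne
      have hlt : c t < c (t + 1) := hchange t hne
      have hlow : c m ≤ c t := hc hmt
      have hhigh : c (t + 1) ≤ c n := hc htn
      omega
    rw [← hstep, ih (Nat.le_of_succ_le htn)]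

theorem path_present_throughout_of_counters_eq_general {V : Type*}
    (E : ℕ → V → V → Prop) (c : ℕ → V → ℕ)
    (hmono : ∀ u, Monotone (fun n => c n u))
    (hinc : ∀ n u, (∃ v, ¬(E n u v ↔ E (n + 1) u v)) → c n u < c (n + 1) u)
    (m n : ℕ) (k : ℕ) (v : ℕ → V)
    (hpath : ∀ i < k, E m (v i) (v (i + 1)))
    (hc : ∀ i < k, c m (v i) = c n (v i)) :
    ∀ t, m ≤ t → t ≤ n → ∀ i < k, E t (v i) (v (i + 1)) := by
  intro t hmt htn i hik
  have hchange : ∀ s, E s (v i) ≠ E (s + 1) (v i) → c s (v i) < c (s + 1) (v i) := by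
    intro s hne
    refine hinc s (v i) ?_
    by_contra! hsame
    exact hne (funext fun w => propext (hsame w))
  rw [eq_of_counter_eq (fun s => E s (v i)) (fun s => c s (v i)) (hmono (v i)) hchange
    (hc i hik) hmt htn]
  exact hpath i hik

theorem path_present_throughout_of_counters_eq {V : Type*}
    (E : ℕ → V → V → Prop) (c : ℕ → V → ℕ)
    (hmono : ∀ u, Monotone (fun n => c n u))
    (hinc : ∀ n u, (∃ v, ¬(E n u v ↔ E (n + 1) u v)) → c n u < c (n + 1) u)
    (m n : ℕ) (hmn : m ≤ n) (k : ℕ) (v : ℕ → V)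
    (hpath : ∀ i < k, E m (v i) (v (i + 1)))
    (hc : ∀ i < k, c m (v i) = c n (v i)) :
    ∀ t, m ≤ t → t ≤ n → ∀ i < k, E t (v i) (v (i + 1)) :=
  path_present_throughout_of_counters_eq_general E c hmono hinc m n k v hpath hc
end
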